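/- Assume C > 2. Then the function g is strictly increasing on [2, C): for all reals q, q' with 2 ≤ q < q' < C, g(q) < g(q'). -/
import Mathlib


noncomputable def alphaC : ℝ := -3 - 9 * Real.log (2 / 3)

noncomputable def Delta1 (d : ℕ) (δ q : ℝ) : ℝ :=
  Real.sqrt d * (q - 1) + Real.sqrt (2 * Real.sqrt d * (q - 1) * Real.log (2 / δ)) +
    (4 / 3) * Real.log (2 / δ)

noncomputable def Delta2 (d : ℕ) (δ q : ℝ) : ℝ :=
  (q - 1) + Real.sqrt (Delta1 d δ q + Real.sqrt (2 * Real.sqrt d * (q - 1) * Real.log (2 / δ)))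

def DeltaInf (q : ℝ) : ℝ := q + 1

noncomputable def S1 (n p : ℝ) : ℝ :=
  ((3 * p ^ 2 - 3 * p + 1) / (n * (n + 1) * (n + 2) * p ^ 2 * (1 - p) ^ 2)) *
    (3 * n + 2 + 2 / (p * (1 - p)))

noncomputable def S2 (d : ℕ) (δ n p : ℝ) : ℝ :=
  (Real.sqrt (2 * n * p * (1 - p) * Real.log (20 * d / δ)) + 1 +
    (2 / 3) * max p (1 - p) * Real.log (20 * d / δ)) ^ 2

/-- The privacy budget estimate ε(q, n, p). -/
noncomputable def eps (d : ℕ) (δ q n p : ℝ) : ℝ :=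
  Delta2 d δ q * Real.sqrt (2 * Real.log (1.25 / δ)) / Real.sqrt (n * p * (1 - p)) +
  alphaC * Delta1 d δ q * (n * p * (1 - p) + 1) * (p ^ 2 + (1 - p) ^ 2) /
    (n ^ 2 * p ^ 2 * (1 - p) ^ 2 * (1 - δ / 10)) +
  (Delta2 d δ q / Real.sqrt (1 - δ / 10)) * Real.sqrt (2 * S1 n p * Real.log (10 / δ)) +
  (2 / 3) * alphaC * S2 d δ n p * (p ^ 2 + (1 - p) ^ 2) * Real.log (10 / δ) * DeltaInf q /
    (n ^ 2 * p ^ 2 * (1 - p) ^ 2) +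
  2 * Real.log (1.25 / δ) * DeltaInf q / (n * p * (1 - p))

/-- The channel-capacity constant C = (1 + min_k P^max_k h_k / ω₀)^{TW/d}. -/
noncomputable def Cval {ι : Type*} [Fintype ι] [Nonempty ι] (d : ℕ) (T W ω₀ : ℝ)
    (h Pmax : ι → ℝ) : ℝ :=
  (1 + Finset.univ.inf' Finset.univ_nonempty (fun k => Pmax k * h k / ω₀)) ^ (T * W / (d : ℝ))

/-- r(q) = (C - q)/4. -/
noncomputable def rfun {ι : Type*} [Fintype ι] [Nonempty ι] (d : ℕ) (T W ω₀ : ℝ)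
    (h Pmax : ι → ℝ) (q : ℝ) : ℝ :=
  (Cval d T W ω₀ h Pmax - q) / 4

noncomputable def g1 {ι : Type*} [Fintype ι] [Nonempty ι] (d : ℕ) (δ T W ω₀ : ℝ)
    (h Pmax : ι → ℝ) (q : ℝ) : ℝ :=
  Delta2 d δ q * Real.sqrt (2 * Real.log (1.25 / δ)) / Real.sqrt (rfun d T W ω₀ h Pmax q)

noncomputable def g2 {ι : Type*} [Fintype ι] [Nonempty ι] (d : ℕ) (δ T W ω₀ : ℝ)
    (h Pmax : ι → ℝ) (q : ℝ) : ℝ :=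
  alphaC * Delta1 d δ q * (rfun d T W ω₀ h Pmax q + 1) /
    (2 * (1 - δ / 10) * (rfun d T W ω₀ h Pmax q) ^ 2)

noncomputable def g3 {ι : Type*} [Fintype ι] [Nonempty ι] (d : ℕ) (δ T W ω₀ : ℝ)
    (h Pmax : ι → ℝ) (q : ℝ) : ℝ :=
  (Delta2 d δ q / Real.sqrt (1 - δ / 10)) *
    Real.sqrt (((rfun d T W ω₀ h Pmax q + 1) / (rfun d T W ω₀ h Pmax q) ^ 3) *
      Real.log (10 / δ))

noncomputable def g4 {ι : Type*} [Fintype ι] [Nonempty ι] (d : ℕ) (δ T W ω₀ : ℝ)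
    (h Pmax : ι → ℝ) (q : ℝ) : ℝ :=
  (alphaC / 3) * Real.log (10 / δ) * DeltaInf q *
    (Real.sqrt (2 * Real.log (20 * d / δ) / rfun d T W ω₀ h Pmax q) +
      (3 + Real.log (20 * d / δ)) / (3 * rfun d T W ω₀ h Pmax q)) ^ 2

noncomputable def g5 {ι : Type*} [Fintype ι] [Nonempty ι] (d : ℕ) (δ T W ω₀ : ℝ)
    (h Pmax : ι → ℝ) (q : ℝ) : ℝ :=
  2 * Real.log (1.25 / δ) * DeltaInf q / rfun d T W ω₀ h Pmax q

noncomputable def gfun {ι : Type*} [Fintype ι] [Nonempty ι] (d : ℕ) (δ T W ω₀ : ℝ)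
    (h Pmax : ι → ℝ) (q : ℝ) : ℝ :=
  g1 d δ T W ω₀ h Pmax q + g2 d δ T W ω₀ h Pmax q + g3 d δ T W ω₀ h Pmax q +
    g4 d δ T W ω₀ h Pmax q + g5 d δ T W ω₀ h Pmax q

lemma aux_alpha : 0 < alphaC := by
  unfold alphaC
  have h1 : Real.exp (1/3 : ℝ) < 3/2 := by
    have h3 : Real.exp (1/3 : ℝ) ^ 3 = Real.exp 1 := by
      rw [← Real.exp_nat_mul]; norm_num
    nlinarith [Real.exp_one_lt_d9, Real.exp_pos (1/3 : ℝ), Real.exp_pos (1:ℝ),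
      sq_nonneg (Real.exp (1/3:ℝ) - 3/2), sq_nonneg (Real.exp (1/3:ℝ) + 3/2)]
  have h2 : (1:ℝ)/3 < Real.log (3/2) := by
    have := Real.exp_log (show (0:ℝ) < 3/2 by norm_num)
    rw [← Real.exp_lt_exp, this]; exact h1
  have h4 : Real.log (2/3 : ℝ) = - Real.log (3/2) := by
    rw [← Real.log_inv]; norm_num
  rw [h4]; linarith

lemma aux_ratio2 {s t : ℝ} (hs : 0 < s) (hst : s ≤ t) : (t+1)/t^2 ≤ (s+1)/s^2 := by
  have ht : 0 < t := hs.trans_le hst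
  rw [div_le_div_iff₀ (by positivity) (by positivity)]
  nlinarith [mul_nonneg (mul_nonneg hs.le ht.le) (sub_nonneg.mpr hst)]

lemma aux_ratio3 {s t : ℝ} (hs : 0 < s) (hst : s ≤ t) : (t+1)/t^3 ≤ (s+1)/s^3 := by
  have ht : 0 < t := hs.trans_le hst
  rw [div_le_div_iff₀ (by positivity) (by positivity)]
  have e1 : 0 ≤ (t - s) * (t^2 + s*t + s^2) :=
    mul_nonneg (sub_nonneg.mpr hst) (by nlinarith)
  have e2 : 0 ≤ (t - s) * (s*t*(t+s)) :=
    mul_nonneg (sub_nonneg.mpr hst) (by nlinarith [mul_pos hs ht])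
  nlinarith [e1, e2]

lemma aux_main (d : ℕ) (hd : 1 ≤ d) (δ : ℝ) (hδ0 : 0 < δ) (hδ1 : δ < 1)
    (q q' s t : ℝ) (hq : 2 ≤ q) (hqq' : q < q')
    (hs0 : 0 < s) (hst : s ≤ t) :
    Delta2 d δ q * Real.sqrt (2 * Real.log (1.25 / δ)) / Real.sqrt t +
    alphaC * Delta1 d δ q * (t + 1) / (2 * (1 - δ / 10) * t ^ 2) +
    (Delta2 d δ q / Real.sqrt (1 - δ / 10)) * Real.sqrt (((t + 1) / t ^ 3) * Real.log (10 / δ)) +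
    (alphaC / 3) * Real.log (10 / δ) * (q + 1) *
      (Real.sqrt (2 * Real.log (20 * d / δ) / t) + (3 + Real.log (20 * d / δ)) / (3 * t)) ^ 2 +
    2 * Real.log (1.25 / δ) * (q + 1) / t
    <
    Delta2 d δ q' * Real.sqrt (2 * Real.log (1.25 / δ)) / Real.sqrt s +
    alphaC * Delta1 d δ q' * (s + 1) / (2 * (1 - δ / 10) * s ^ 2) +
    (Delta2 d δ q' / Real.sqrt (1 - δ / 10)) * Real.sqrt (((s + 1) / s ^ 3) * Real.log (10 / δ)) +
    (alphaC / 3) * Real.log (10 / δ) * (q' + 1) *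
      (Real.sqrt (2 * Real.log (20 * d / δ) / s) + (3 + Real.log (20 * d / δ)) / (3 * s)) ^ 2 +
    2 * Real.log (1.25 / δ) * (q' + 1) / s := by
  have ht0 : 0 < t := hs0.trans_le hst
  have hq'2 : 2 < q' := lt_of_le_of_lt hq hqq'
  have hL2 : 0 < Real.log (2/δ) := Real.log_pos ((one_lt_div hδ0).mpr (by linarith))
  have hL125 : 0 < Real.log (1.25/δ) := Real.log_pos ((one_lt_div hδ0).mpr (by linarith))
  have hL10 : 0 < Real.log (10/δ) := Real.log_pos ((one_lt_div hδ0).mpr (by linarith))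
  have hd1 : (1:ℝ) ≤ (d:ℝ) := by exact_mod_cast hd
  have hL20 : 0 < Real.log (20*d/δ) := Real.log_pos ((one_lt_div hδ0).mpr (by linarith))
  have hden : 0 < 1 - δ/10 := by linarith
  have hsd : 1 ≤ Real.sqrt d := by
    rw [show (1:ℝ) = Real.sqrt 1 by simp]
    exact Real.sqrt_le_sqrt hd1
  have hsd0 : 0 ≤ Real.sqrt (d:ℝ) := Real.sqrt_nonneg _
  -- Delta1 facts
  have hD1 : Delta1 d δ q ≤ Delta1 d δ q' := by
    unfold Delta1
    gcongr <;> first | positivity | linarith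
  have hD1p : 0 < Delta1 d δ q := by
    unfold Delta1
    have h1 : 1 ≤ Real.sqrt d * (q - 1) := by nlinarith
    have h2 := Real.sqrt_nonneg (2 * Real.sqrt d * (q - 1) * Real.log (2 / δ))
    linarith
  have hD1p' : 0 < Delta1 d δ q' := lt_of_lt_of_le hD1p hD1
  -- Delta2 facts
  have hD2lt : Delta2 d δ q < Delta2 d δ q' := by
    unfold Delta2
    have hsq : Real.sqrt (Delta1 d δ q + Real.sqrt (2 * Real.sqrt d * (q-1) * Real.log (2/δ)))
        ≤ Real.sqrt (Delta1 d δ q' + Real.sqrt (2 * Real.sqrt d * (q'-1) * Real.log (2/δ))) := by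
      gcongr <;> first | positivity | linarith
    linarith
  have hD2p : 0 < Delta2 d δ q := by
    unfold Delta2
    have := Real.sqrt_nonneg (Delta1 d δ q + Real.sqrt (2 * Real.sqrt d * (q-1) * Real.log (2/δ)))
    linarith
  have hD2p' : 0 < Delta2 d δ q' := lt_of_lt_of_le hD2p hD2lt.le
  have hK : 0 < Real.sqrt (2*Real.log (1.25/δ)) := Real.sqrt_pos.mpr (by linarith)
  have hsqs : 0 < Real.sqrt s := Real.sqrt_pos.mpr hs0
  have hsqst : Real.sqrt s ≤ Real.sqrt t := Real.sqrt_le_sqrt hst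
  -- g1 strict
  have hg1 : Delta2 d δ q * Real.sqrt (2 * Real.log (1.25 / δ)) / Real.sqrt t
      < Delta2 d δ q' * Real.sqrt (2 * Real.log (1.25 / δ)) / Real.sqrt s := by
    have h1 : Delta2 d δ q * Real.sqrt (2 * Real.log (1.25 / δ)) / Real.sqrt t
        ≤ Delta2 d δ q * Real.sqrt (2 * Real.log (1.25 / δ)) / Real.sqrt s := by
      exact div_le_div_of_nonneg_left (mul_nonneg hD2p.le hK.le) hsqs hsqst
    have h2 : Delta2 d δ q * Real.sqrt (2 * Real.log (1.25 / δ)) / Real.sqrt s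
        < Delta2 d δ q' * Real.sqrt (2 * Real.log (1.25 / δ)) / Real.sqrt s := by
      exact div_lt_div_of_pos_right (mul_lt_mul_of_pos_right hD2lt hK) hsqs
    linarith
  -- g2
  have hg2 : alphaC * Delta1 d δ q * (t + 1) / (2 * (1 - δ / 10) * t ^ 2)
      ≤ alphaC * Delta1 d δ q' * (s + 1) / (2 * (1 - δ / 10) * s ^ 2) := by
    have e : ∀ a r : ℝ, r ≠ 0 →
        alphaC * a * (r+1) / (2*(1-δ/10)*r^2) = (alphaC * a/(2*(1-δ/10))) * ((r+1)/r^2) := by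
      intro a r hr; field_simp
    rw [e _ t ht0.ne', e _ s hs0.ne']
    apply mul_le_mul
    · exact div_le_div_of_nonneg_right (mul_le_mul_of_nonneg_left hD1 aux_alpha.le) (by linarith)
    · exact aux_ratio2 hs0 hst
    · exact div_nonneg (by linarith) (by positivity)
    · exact div_nonneg (mul_nonneg aux_alpha.le hD1p'.le) (by linarith)
  -- g3
  have hg3 : (Delta2 d δ q / Real.sqrt (1 - δ / 10)) *
        Real.sqrt (((t + 1) / t ^ 3) * Real.log (10 / δ))
      ≤ (Delta2 d δ q' / Real.sqrt (1 - δ / 10)) *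
        Real.sqrt (((s + 1) / s ^ 3) * Real.log (10 / δ)) := by
    apply mul_le_mul
    · exact div_le_div_of_nonneg_right hD2lt.le (Real.sqrt_nonneg _)
    · exact Real.sqrt_le_sqrt (mul_le_mul_of_nonneg_right (aux_ratio3 hs0 hst) hL10.le)
    · exact Real.sqrt_nonneg _
    · exact div_nonneg hD2p'.le (Real.sqrt_nonneg _)
  -- g4
  have hA : Real.sqrt (2 * Real.log (20 * d / δ) / t) + (3 + Real.log (20 * d / δ)) / (3 * t)
      ≤ Real.sqrt (2 * Real.log (20 * d / δ) / s) + (3 + Real.log (20 * d / δ)) / (3 * s) := by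
    gcongr <;> first | positivity | linarith
  have hAnn : 0 ≤ Real.sqrt (2 * Real.log (20 * d / δ) / t) +
      (3 + Real.log (20 * d / δ)) / (3 * t) :=
    add_nonneg (Real.sqrt_nonneg _) (div_nonneg (by linarith) (by linarith))
  have hg4 : (alphaC / 3) * Real.log (10 / δ) * (q + 1) *
        (Real.sqrt (2 * Real.log (20 * d / δ) / t) + (3 + Real.log (20 * d / δ)) / (3 * t)) ^ 2
      ≤ (alphaC / 3) * Real.log (10 / δ) * (q' + 1) *
        (Real.sqrt (2 * Real.log (20 * d / δ) / s) + (3 + Real.log (20 * d / δ)) / (3 * s)) ^ 2 := by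
    apply mul_le_mul
    · apply mul_le_mul_of_nonneg_left (by linarith)
      exact mul_nonneg (div_nonneg aux_alpha.le (by norm_num)) hL10.le
    · exact pow_le_pow_left₀ hAnn hA 2
    · positivity
    · have : (0:ℝ) ≤ q' + 1 := by linarith
      exact mul_nonneg (mul_nonneg (div_nonneg aux_alpha.le (by norm_num)) hL10.le) this
  -- g5
  have hg5 : 2 * Real.log (1.25 / δ) * (q + 1) / t
      ≤ 2 * Real.log (1.25 / δ) * (q' + 1) / s := by
    gcongr <;> first | positivity | linarith
  linarith

/-- g is strictly increasing on [2, C). -/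
theorem gfun_strictMono {ι : Type*} [Fintype ι] [Nonempty ι] (d : ℕ) (hd : 1 ≤ d)
    (δ : ℝ) (hδ : δ ∈ Set.Ioo (0 : ℝ) 1) (T W ω₀ : ℝ) (hT : 0 < T) (hW : 0 < W)
    (hω : 0 < ω₀) (h Pmax : ι → ℝ) (hh : ∀ k, 0 < h k) (hPmax : ∀ k, 0 < Pmax k)
    (hC : 2 < Cval d T W ω₀ h Pmax) :
    ∀ q q' : ℝ, 2 ≤ q → q < q' → q' < Cval d T W ω₀ h Pmax →
      gfun d δ T W ω₀ h Pmax q < gfun d δ T W ω₀ h Pmax q' := by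
  intro q q' hq hqq' hq'
  obtain ⟨hδ0, hδ1⟩ := hδ
  have hs0 : 0 < rfun d T W ω₀ h Pmax q' := by unfold rfun; linarith
  have hst : rfun d T W ω₀ h Pmax q' ≤ rfun d T W ω₀ h Pmax q := by unfold rfun; linarith
  unfold gfun g1 g2 g3 g4 g5 DeltaInf
  exact aux_main d hd δ hδ0 hδ1 q q' _ _ hq hqq' hs0 hst
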